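/- arXiv:2508.14598 — 11 statements merged into one kernel-verified Lean document; each statement's English description precedes it below -/
import Mathlib

section
/- Let A be a commutative locally profinite group (a Hausdorff commutative topological group admitting a compact open subgroup) such that for some compact open subgroup U of A the quotient group A/U is finitely generated. Let A⁺ ⊆ A be an open submonoid and b0 ∈ A⁺ an element such that A = A⁺[b0⁻¹]. Then there exists an open submonoid Ã⁺ of A contained in A⁺, containing b0, satisfying A = Ã⁺[b0⁻¹], and such that for every compact open subgroup U′ of A contained in Ã⁺ the image of Ã⁺ in the quotient group A/U′ is a finitely generated monoid. -/
/-- Let `A` be a commutative locally profinite group (Hausdorff commutative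
topological group with a compact open subgroup) such that for some compact open subgroup
`U ⊆ A` the quotient `A/U` is a finitely generated group.  Let `A⁺ ⊆ A` be an open
submonoid and `b0 ∈ A⁺` with `A = A⁺[b0⁻¹]`.  Then there is an open submonoid `Ã⁺ ⊆ A⁺`
containing `b0`, satisfying `A = Ã⁺[b0⁻¹]`, and such that for every compact open subgroup
`U′ ⊆ Ã⁺` the image of `Ã⁺` in `A/U′` is a finitely generated monoid. -/
theorem exists_open_submonoid_fg_quotients {A : Type*} [CommGroup A] [TopologicalSpace A]
    [IsTopologicalGroup A] [T2Space A]
    (U : Subgroup A) (hUcpt : IsCompact (U : Set A)) (hUopen : IsOpen (U : Set A))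
    (hUfg : Group.FG (A ⧸ U))
    (Aplus : Submonoid A) (hAplusOpen : IsOpen (Aplus : Set A))
    (b0 : A) (hb0 : b0 ∈ Aplus)
    (hgen : ∀ a : A, ∃ x ∈ Aplus, ∃ n : ℕ, a = x * b0⁻¹ ^ n) :
    ∃ Atil : Submonoid A, IsOpen (Atil : Set A) ∧ Atil ≤ Aplus ∧ b0 ∈ Atil ∧
      (∀ a : A, ∃ x ∈ Atil, ∃ n : ℕ, a = x * b0⁻¹ ^ n) ∧
      ∀ U' : Subgroup A, IsCompact (U' : Set A) → IsOpen (U' : Set A) →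
        (U' : Set A) ⊆ (Atil : Set A) →
        (Atil.map (QuotientGroup.mk' U')).FG := by
  classical
  -- Step 1: find `N` with `U * b0 ^ N ⊆ Aplus`.
  set V : ℕ → Set A := fun n => (fun u => u * b0 ^ n) ⁻¹' (Aplus : Set A) with hVdef
  have hVopen : ∀ n, IsOpen (V n) := fun n =>
    hAplusOpen.preimage (continuous_id.mul continuous_const)
  have hVmono : ∀ n m, n ≤ m → V n ⊆ V m := by
    intro n m hnm u hu
    have h1 : u * b0 ^ m = (u * b0 ^ n) * b0 ^ (m - n) := by
      rw [mul_assoc, ← pow_add, Nat.add_sub_cancel' hnm]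
    have : u * b0 ^ m ∈ Aplus := by
      rw [h1]; exact Submonoid.mul_mem _ hu (Submonoid.pow_mem _ hb0 _)
    exact this
  have hcover : (U : Set A) ⊆ ⋃ n, V n := by
    intro u _
    obtain ⟨x, hx, n, hn⟩ := hgen u
    refine Set.mem_iUnion.2 ⟨n, ?_⟩
    have : u * b0 ^ n = x := by rw [hn, inv_pow, inv_mul_cancel_right]
    show u * b0 ^ n ∈ Aplus
    rw [this]; exact hx
  obtain ⟨t, ht⟩ := hUcpt.elim_finite_subcover V hVopen hcover
  set N := t.sup id with hNdef
  have hUN : ∀ u ∈ U, u * b0 ^ N ∈ Aplus := by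
    intro u hu
    obtain ⟨n, hn, hun⟩ := Set.mem_iUnion₂.1 (ht hu)
    exact hVmono n N (Finset.le_sup (f := id) hn) hun
  -- Step 2: generators of the quotient.
  obtain ⟨S, hSclosure, hSfin⟩ := Group.fg_iff.mp hUfg
  choose x hx n hn using fun c : A ⧸ U => hgen c.out
  set S' : Set (A ⧸ U) := S ∪ S⁻¹ with hS'def
  have hS'fin : S'.Finite := hSfin.union hSfin.inv
  set Gen : Set A :=
    (((U : Set A) ∩ (Aplus : Set A)) ∪ ((fun u => u * b0 ^ N) '' (U : Set A)) ∪ {b0})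
      ∪ (x '' S') with hGendef
  set M : Submonoid A := Submonoid.closure Gen with hMdef
  have hGensub : Gen ⊆ (Aplus : Set A) := by
    rintro a (((⟨_, h⟩ | ⟨u, hu, rfl⟩) | rfl) | ⟨c, _, rfl⟩)
    · exact h
    · exact hUN u hu
    · exact hb0
    · exact hx _
  have hMle : M ≤ Aplus := Submonoid.closure_le.2 hGensub
  have hb0M : b0 ∈ M :=
    Submonoid.subset_closure (Or.inl (Or.inr rfl))
  have hUA : ∀ u ∈ U, u * b0 ^ N ∈ M := fun u hu =>
    Submonoid.subset_closure (Or.inl (Or.inl (Or.inr ⟨u, hu, rfl⟩)))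
  have hMopen : IsOpen (M : Set A) := by
    rw [isOpen_iff_forall_mem_open]
    intro m hm
    refine ⟨(fun y => m * y) '' ((U : Set A) ∩ (Aplus : Set A)), ?_, ?_, ?_⟩
    · rintro _ ⟨v, hv, rfl⟩
      exact M.mul_mem hm (Submonoid.subset_closure (Or.inl (Or.inl (Or.inl hv))))
    · exact (Homeomorph.mulLeft m).isOpenMap _ (hUopen.inter hAplusOpen)
    · exact ⟨1, ⟨U.one_mem, Aplus.one_mem⟩, mul_one m⟩
  -- Step 3: `A = M[b0⁻¹]`.
  have key : ∀ c : A ⧸ U, ∃ b : A, (b : A ⧸ U) = c ∧ ∃ k : ℕ, b * b0 ^ k ∈ M := by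
    intro c
    have hc : c ∈ Submonoid.closure S' := by
      have h2 := Subgroup.closure_toSubmonoid S
      rw [hSclosure] at h2
      rw [hS'def, ← h2]
      exact trivial
    induction hc using Submonoid.closure_induction with
    | mem c hc =>
      refine ⟨c.out, QuotientGroup.out_eq' c, n c, ?_⟩
      have : c.out * b0 ^ n c = x c := by rw [hn c, inv_pow, inv_mul_cancel_right]
      rw [this]
      exact Submonoid.subset_closure (Or.inr ⟨c, hc, rfl⟩)
    | one => exact ⟨1, rfl, 0, by simpa using M.one_mem⟩
    | mul c d _ _ hc hd =>
      obtain ⟨b, hb, k, hbk⟩ := hc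
      obtain ⟨b', hb', k', hbk'⟩ := hd
      refine ⟨b * b', by rw [QuotientGroup.mk_mul, hb, hb'], k + k', ?_⟩
      have : b * b' * b0 ^ (k + k') = (b * b0 ^ k) * (b' * b0 ^ k') := by
        rw [pow_add]; exact mul_mul_mul_comm b b' (b0 ^ k) (b0 ^ k')
      rw [this]
      exact M.mul_mem hbk hbk'
  have hgenM : ∀ a : A, ∃ y ∈ M, ∃ k : ℕ, a = y * b0⁻¹ ^ k := by
    intro a
    obtain ⟨b, hb, k, hbk⟩ := key (a : A ⧸ U)
    have hu : b⁻¹ * a ∈ U := QuotientGroup.eq.mp hb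
    refine ⟨a * b0 ^ (k + N), ?_, k + N, ?_⟩
    · have h3 : a * b0 ^ (k + N) = (b * b0 ^ k) * ((b⁻¹ * a) * b0 ^ N) := by
        rw [pow_add, mul_mul_mul_comm, mul_inv_cancel_left]
      rw [h3]
      exact M.mul_mem hbk (hUA _ hu)
    · rw [inv_pow, mul_inv_cancel_right]
  refine ⟨M, hMopen, hMle, hb0M, hgenM, ?_⟩
  -- Step 4: finite generation of the images.
  intro U' hU'cpt hU'open _
  have himK : ∀ K : Set A, IsCompact K →
      ((QuotientGroup.mk' U') '' K).Finite := by
    intro K hK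
    obtain ⟨t', ht'⟩ := hK.elim_finite_subcover
      (fun a : A => (fun y => a * y) '' (U' : Set A))
      (fun a => (Homeomorph.mulLeft a).isOpenMap _ hU'open)
      (fun k _ => Set.mem_iUnion.2 ⟨k, 1, U'.one_mem, mul_one k⟩)
    refine (t'.finite_toSet.image (QuotientGroup.mk' U')).subset ?_
    rintro _ ⟨a, ha, rfl⟩
    obtain ⟨b, hb, v, hv, hav⟩ := Set.mem_iUnion₂.1 (ht' ha)
    refine ⟨b, hb, ?_⟩
    have hba : b⁻¹ * a ∈ U' := by
      rw [← hav]; simpa using hv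
    show QuotientGroup.mk b = QuotientGroup.mk a
    exact QuotientGroup.eq.mpr hba
  have hmap : M.map (QuotientGroup.mk' U') =
      Submonoid.closure ((QuotientGroup.mk' U') '' Gen) := by
    rw [hMdef]; exact MonoidHom.map_mclosure _ _
  rw [hmap]
  refine (Submonoid.fg_iff _).mpr ⟨_, rfl, ?_⟩
  rw [hGendef]
  rw [Set.image_union, Set.image_union, Set.image_union]
  refine Set.Finite.union (Set.Finite.union (Set.Finite.union ?_ ?_) ?_) ?_
  · exact (himK _ hUcpt).subset (Set.image_mono Set.inter_subset_left)
  · exact himK _ (hUcpt.image (continuous_id.mul continuous_const))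
  · exact (Set.finite_singleton b0).image _
  · exact (hS'fin.image x).image _
end

section
/- Let A be a commutative group that is finitely generated, let A⁺ ⊆ A be a submonoid and b0 ∈ A⁺ an element such that A = A⁺[b0⁻¹]. Then there exists a finitely generated submonoid Ã⁺ of A contained in A⁺, containing b0, and satisfying A = Ã⁺[b0⁻¹]. -/
/-- Let `A` be a finitely generated commutative group, `A⁺ ⊆ A` a submonoid
and `b0 ∈ A⁺` such that `A = A⁺[b0⁻¹]` (every `a ∈ A` is of the form `x * b0⁻ⁿ` with
`x ∈ A⁺`).  Then there is a finitely generated submonoid `Ã⁺ ⊆ A⁺` containing `b0` and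
still satisfying `A = Ã⁺[b0⁻¹]`. -/
theorem exists_fg_submonoid_localization {A : Type*} [CommGroup A] (hA : Group.FG A)
    (Aplus : Submonoid A) (b0 : A) (hb0 : b0 ∈ Aplus)
    (hgen : ∀ a : A, ∃ x ∈ Aplus, ∃ n : ℕ, a = x * b0⁻¹ ^ n) :
    ∃ Atil : Submonoid A, Atil.FG ∧ Atil ≤ Aplus ∧ b0 ∈ Atil ∧
      ∀ a : A, ∃ x ∈ Atil, ∃ n : ℕ, a = x * b0⁻¹ ^ n := by
  obtain ⟨S, hS⟩ := hA.1
  set T : Set A := ↑S ∪ (↑S : Set A)⁻¹ with hT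
  have hTfin : T.Finite := S.finite_toSet.union (S.finite_toSet.inv)
  have hTmon : ∀ a : A, a ∈ Submonoid.closure T := by
    intro a
    have h1 : Subgroup.closure T = ⊤ := by
      apply top_unique
      rw [← hS]
      exact Subgroup.closure_mono (Set.subset_union_left)
    have h2 : T⁻¹ ⊆ T := by
      intro y hy
      rcases hy with h | h
      · exact Or.inr h
      · exact Or.inl (by simpa using h)
    have h3 : Submonoid.closure (T ∪ T⁻¹) = ⊤ := by
      rw [← Subgroup.closure_toSubmonoid, h1]; rfl
    rw [Set.union_eq_self_of_subset_right h2] at h3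
    rw [h3]; trivial
  choose x hx n hn using fun t : A => hgen t
  refine ⟨Submonoid.closure ({b0} ∪ x '' T), ?_, ?_, ?_, ?_⟩
  · exact ⟨((Set.finite_singleton b0).union (hTfin.image x)).toFinset, by simp⟩
  · rw [Submonoid.closure_le]
    rintro y (rfl | ⟨t, _, rfl⟩)
    · exact hb0
    · exact hx t
  · exact Submonoid.subset_closure (Or.inl rfl)
  · intro a
    have h := hTmon a
    induction h using Submonoid.closure_induction with
    | mem t ht =>
      exact ⟨x t, Submonoid.subset_closure (Or.inr ⟨t, ht, rfl⟩), n t, hn t⟩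
    | one => exact ⟨1, one_mem _, 0, by simp⟩
    | mul u v _ _ hu hv =>
      obtain ⟨xu, hxu, nu, rfl⟩ := hu
      obtain ⟨xv, hxv, nv, rfl⟩ := hv
      exact ⟨xu * xv, mul_mem hxu hxv, nu + nv, by rw [pow_add, mul_mul_mul_comm]⟩
end

section
/- Let G be a group and let N, M, N̄ be subgroups of G such that the multiplication map N × M × N̄ → G, (n, m, n̄) ↦ n·m·n̄, is injective. Let N₀ ⊆ N, M₀ ⊆ M, N̄₀ ⊆ N̄ be subgroups such that the product set K = N₀·M₀·N̄₀ is a subgroup of G. Let a ∈ M be an element satisfying a·N·a⁻¹ = N, a·N̄·a⁻¹ = N̄, a·M₀·a⁻¹ = M₀, a·N₀·a⁻¹ ⊆ N₀ and N̄₀ ⊆ a·N̄₀·a⁻¹. Then K ∩ a·K·a⁻¹ = (a·N₀·a⁻¹)·M₀·N̄₀, and the inclusion N₀ ⊆ K induces a bijection from the left coset space N₀/(a·N₀·a⁻¹) onto the left coset space K/(K ∩ a·K·a⁻¹). -/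
open Pointwise

/-- Let `G` be a group, `N, M, N̄ ≤ G` subgroups with injective
multiplication `N × M × N̄ → G`, and `N₀ ≤ N`, `M₀ ≤ M`, `N̄₀ ≤ N̄` subgroups such that
the product set `K = N₀·M₀·N̄₀` is a subgroup.  Let `a ∈ M` with `aNa⁻¹ = N`,
`aN̄a⁻¹ = N̄`, `aM₀a⁻¹ = M₀`, `aN₀a⁻¹ ⊆ N₀` and `N̄₀ ⊆ aN̄₀a⁻¹`.  Then
`K ∩ aKa⁻¹ = (aN₀a⁻¹)·M₀·N̄₀`, and the inclusion `N₀ ⊆ K` induces a bijection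
`N₀/(aN₀a⁻¹) ≃ K/(K ∩ aKa⁻¹)` on left coset spaces. -/
theorem iwahori_coset_bijection {G : Type*} [Group G] (N M Nbar : Subgroup G)
    (hinj : Function.Injective
      (fun p : ↥N × ↥M × ↥Nbar => (p.1 : G) * (p.2.1 : G) * (p.2.2 : G)))
    (N₀ M₀ Nbar₀ K : Subgroup G)
    (hN₀ : N₀ ≤ N) (hM₀ : M₀ ≤ M) (hNbar₀ : Nbar₀ ≤ Nbar)
    (hK : (K : Set G) = (N₀ : Set G) * (M₀ : Set G) * (Nbar₀ : Set G))
    (a : G) (ha : a ∈ M)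
    (haN : (fun x => a * x * a⁻¹) '' (N : Set G) = (N : Set G))
    (haNbar : (fun x => a * x * a⁻¹) '' (Nbar : Set G) = (Nbar : Set G))
    (haM₀ : (fun x => a * x * a⁻¹) '' (M₀ : Set G) = (M₀ : Set G))
    (haN₀ : (fun x => a * x * a⁻¹) '' (N₀ : Set G) ⊆ (N₀ : Set G))
    (haNbar₀ : (Nbar₀ : Set G) ⊆ (fun x => a * x * a⁻¹) '' (Nbar₀ : Set G)) :
    (K : Set G) ∩ ((fun x => a * x * a⁻¹) '' (K : Set G)) =
      ((fun x => a * x * a⁻¹) '' (N₀ : Set G)) * (M₀ : Set G) * (Nbar₀ : Set G) ∧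
    ∃ f : N₀ ⧸ (Subgroup.map (MulAut.conj a).toMonoidHom N₀).subgroupOf N₀ →
        K ⧸ ((K ⊓ Subgroup.map (MulAut.conj a).toMonoidHom K).subgroupOf K),
      Function.Bijective f ∧
      ∀ (n : G) (hn : n ∈ N₀) (hn' : n ∈ K),
        f (QuotientGroup.mk (⟨n, hn⟩ : ↥N₀)) = QuotientGroup.mk (⟨n, hn'⟩ : ↥K) := by
  have hc : (fun x => a * x * a⁻¹) = ⇑(MulAut.conj a) := by
    funext x; simp [MulAut.conj_apply]
  rw [hc] at haN haNbar haM₀ haN₀ haNbar₀ ⊢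
  set c := MulAut.conj a with hcdef
  -- membership in triple products
  have hmem : ∀ (x : G) (S T U : Set G),
      x ∈ S * T * U ↔ ∃ s ∈ S, ∃ t ∈ T, ∃ u ∈ U, s * t * u = x := by
    intro x S T U
    simp only [Set.mem_mul]
    constructor
    · rintro ⟨_, ⟨s, hs, t, ht, rfl⟩, u, hu, rfl⟩; exact ⟨s, hs, t, ht, u, hu, rfl⟩
    · rintro ⟨s, hs, t, ht, u, hu, rfl⟩; exact ⟨s * t, ⟨s, hs, t, ht, rfl⟩, u, hu, rfl⟩
  -- conjugate of K
  have hcK : ⇑c '' (K : Set G) = (⇑c '' (N₀ : Set G)) * (M₀ : Set G) * (⇑c '' (Nbar₀ : Set G)) := by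
    rw [hK, Set.image_mul, Set.image_mul, haM₀]
  -- N₀ ⊆ K, M₀Nbar₀ facts
  have hN₀K : (N₀ : Set G) ⊆ (K : Set G) := by
    intro n hn
    rw [hK, hmem]
    exact ⟨n, hn, 1, M₀.one_mem, 1, Nbar₀.one_mem, by group⟩
  -- key set equality
  have key : (K : Set G) ∩ (⇑c '' (K : Set G)) =
      (⇑c '' (N₀ : Set G)) * (M₀ : Set G) * (Nbar₀ : Set G) := by
    ext x
    constructor
    · rintro ⟨hxK, hxcK⟩
      rw [hK, hmem] at hxK
      obtain ⟨n, hn, m, hm, nb, hnb, hx⟩ := hxK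
      rw [hcK, hmem] at hxcK
      obtain ⟨n', hn', m', hm', nb', hnb', hx'⟩ := hxcK
      -- identify components via hinj
      have hnN : n ∈ N := hN₀ hn
      have hn'N : (n' : G) ∈ N := hN₀ (haN₀ hn')
      have hmM : m ∈ M := hM₀ hm
      have hm'M : m' ∈ M := hM₀ hm'
      have hnbNb : nb ∈ Nbar := hNbar₀ hnb
      have hnb'Nb : nb' ∈ Nbar := by
        have : nb' ∈ ⇑c '' (Nbar : Set G) := Set.image_mono hNbar₀ hnb'
        rwa [haNbar] at this
      have heq := hinj (a₁ := (⟨n, hnN⟩, ⟨m, hmM⟩, ⟨nb, hnbNb⟩))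
        (a₂ := (⟨n', hn'N⟩, ⟨m', hm'M⟩, ⟨nb', hnb'Nb⟩)) (by simp [hx, hx'])
      simp only [Prod.mk.injEq, Subtype.mk.injEq] at heq
      rw [hmem]
      exact ⟨n, heq.1 ▸ hn', m, hm, nb, hnb, hx⟩
    · intro hx
      rw [hmem] at hx
      obtain ⟨n', hn', m, hm, nb, hnb, hx⟩ := hx
      constructor
      · rw [hK, hmem]
        exact ⟨n', haN₀ hn', m, hm, nb, hnb, hx⟩
      · rw [hcK, hmem]
        exact ⟨n', hn', m, hm, nb, haNbar₀ hnb, hx⟩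
  refine ⟨key, ?_⟩
  -- quotient map
  have hle : N₀ ≤ K := hN₀K
  set H : Subgroup ↥N₀ := (Subgroup.map c.toMonoidHom N₀).subgroupOf N₀ with hHdef
  set H' : Subgroup ↥K := (K ⊓ Subgroup.map c.toMonoidHom K).subgroupOf K with hH'def
  have hcoe : ∀ S : Subgroup G, ((Subgroup.map c.toMonoidHom S : Subgroup G) : Set G)
      = ⇑c '' (S : Set G) := fun S => rfl
  have hmemH' : ∀ (x : ↥K), x ∈ H' ↔ (x : G) ∈ (⇑c '' (N₀ : Set G)) * (M₀ : Set G) * (Nbar₀ : Set G) := by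
    intro x
    rw [hH'def, Subgroup.mem_subgroupOf, ← key]
    simp [Subgroup.mem_inf, Set.mem_inter_iff, x.2, Subgroup.mem_map, Set.mem_image]
  have hmemH : ∀ (x : ↥N₀), x ∈ H ↔ (x : G) ∈ ⇑c '' (N₀ : Set G) := by
    intro x
    rw [hHdef, Subgroup.mem_subgroupOf]
    simp [Subgroup.mem_map, Set.mem_image]
  have hresp : ∀ x y : ↥N₀, QuotientGroup.leftRel H x y →
      QuotientGroup.leftRel H' (Subgroup.inclusion hle x) (Subgroup.inclusion hle y) := by
    intro x y h
    rw [QuotientGroup.leftRel_apply] at h ⊢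
    rw [hmemH] at h
    rw [hmemH', hmem]
    refine ⟨(x : G)⁻¹ * y, h, 1, M₀.one_mem, 1, Nbar₀.one_mem, by simp⟩
  set f : (N₀ ⧸ H) → (K ⧸ H') :=
    Quotient.map' (Subgroup.inclusion hle) hresp with hfdef
  have hfmk : ∀ x : ↥N₀, f (QuotientGroup.mk x) = QuotientGroup.mk (Subgroup.inclusion hle x) :=
    fun x => rfl
  refine ⟨f, ⟨?_, ?_⟩, ?_⟩
  · -- injective
    intro x y hxy
    obtain ⟨x, rfl⟩ := QuotientGroup.mk_surjective x
    obtain ⟨y, rfl⟩ := QuotientGroup.mk_surjective y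
    rw [hfmk, hfmk, QuotientGroup.eq] at hxy
    rw [QuotientGroup.eq]
    rw [hmemH'] at hxy
    have hxyG : ((((Subgroup.inclusion hle) x)⁻¹ * (Subgroup.inclusion hle) y : ↥K) : G)
        = (x : G)⁻¹ * (y : G) := rfl
    rw [hxyG, hmem] at hxy
    obtain ⟨n', hn', m, hm, nb, hnb, hx⟩ := hxy
    have hself : ((x : G)⁻¹ * y) ∈ N₀ := N₀.mul_mem (N₀.inv_mem x.2) y.2
    have heq := hinj (a₁ := (⟨(x : G)⁻¹ * y, hN₀ hself⟩, 1, 1))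
      (a₂ := (⟨n', hN₀ (haN₀ hn'), ⟩, ⟨m, hM₀ hm⟩, ⟨nb, hNbar₀ hnb⟩)) (by simp [hx])
    simp only [Prod.mk.injEq, Subtype.mk.injEq] at heq
    rw [hmemH]
    have : ((x⁻¹ * y : ↥N₀) : G) = (x : G)⁻¹ * y := rfl
    rw [this, heq.1]
    exact hn'
  · -- surjective
    intro k
    obtain ⟨k, rfl⟩ := QuotientGroup.mk_surjective k
    have hk : (k : G) ∈ (K : Set G) := k.2
    rw [hK, hmem] at hk
    obtain ⟨n, hn, m, hm, nb, hnb, hx⟩ := hk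
    refine ⟨QuotientGroup.mk (⟨n, hn⟩ : ↥N₀), ?_⟩
    rw [hfmk, QuotientGroup.eq, hmemH', hmem]
    refine ⟨1, ⟨1, N₀.one_mem, by simp⟩, m, hm, nb, hnb, ?_⟩
    have h2 : ((((Subgroup.inclusion hle) ⟨n, hn⟩)⁻¹ * k : ↥K) : G) = n⁻¹ * (k : G) := rfl
    rw [h2, ← hx]
    group
  · intro n hn hn'
    exact hfmk ⟨n, hn⟩
end

section
/- Let R be a commutative ring, A a commutative group, A⁺ ⊆ A a submonoid, and b0 ∈ A⁺ an element such that A = A⁺[b0⁻¹]. Regard the monoid algebra R[A] as an R[A⁺]-algebra via the inclusion A⁺ ⊆ A. Then R[A] is the localization of R[A⁺] at the multiplicative submonoid generated by the image of b0 in R[A⁺]; that is, IsLocalization (Submonoid.powers b0) (R[A]) holds, where b0 denotes its image in R[A⁺]. -/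
/-- Let `R` be a commutative ring, `A` a commutative group, `A⁺ ⊆ A` a
submonoid and `b0 ∈ A⁺` with `A = A⁺[b0⁻¹]`.  Regarding the monoid algebra `R[A]` as an
`R[A⁺]`-algebra via the inclusion `A⁺ ⊆ A`, the ring `R[A]` is the localization of
`R[A⁺]` at the powers of (the image of) `b0`. -/
theorem monoidAlgebra_isLocalization {R : Type*} [CommRing R] {A : Type*} [CommGroup A]
    (Aplus : Submonoid A) (b0 : A) (hb0 : b0 ∈ Aplus)
    (hgen : ∀ a : A, ∃ x ∈ Aplus, ∃ n : ℕ, a = x * b0⁻¹ ^ n) :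
    letI : Algebra (MonoidAlgebra R ↥Aplus) (MonoidAlgebra R A) :=
      (MonoidAlgebra.mapDomainRingHom R Aplus.subtype).toAlgebra
    IsLocalization
      (Submonoid.powers (MonoidAlgebra.of R ↥Aplus (⟨b0, hb0⟩ : ↥Aplus)))
      (MonoidAlgebra R A) := by
  letI : Algebra (MonoidAlgebra R ↥Aplus) (MonoidAlgebra R A) :=
    (MonoidAlgebra.mapDomainRingHom R Aplus.subtype).toAlgebra
  set f := MonoidAlgebra.mapDomainRingHom R Aplus.subtype with hf
  have halg : (algebraMap (MonoidAlgebra R ↥Aplus) (MonoidAlgebra R A)) = f := rfl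
  have hf_single : ∀ (s : ↥Aplus) (r : R),
      f (MonoidAlgebra.single s r) = MonoidAlgebra.single (s : A) r := by
    intro s r
    simp [hf, MonoidAlgebra.mapDomainRingHom, Finsupp.mapDomain_single]
  have hfinj : Function.Injective f := by
    intro x y h
    exact MonoidAlgebra.mapDomain_injective Subtype.val_injective h
  have hofpow : ∀ m : ℕ, (MonoidAlgebra.of R A b0) ^ m = MonoidAlgebra.single (b0 ^ m) 1 := by
    intro m
    rw [MonoidAlgebra.of_apply, MonoidAlgebra.single_pow, one_pow]
  have key : ∀ z : MonoidAlgebra R A, ∃ (n : ℕ) (x : MonoidAlgebra R ↥Aplus),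
      z * (MonoidAlgebra.of R A b0) ^ n = f x := by
    intro z
    induction z using MonoidAlgebra.induction with
    | zero => exact ⟨0, 0, by simp⟩
    | single_add a r g hag hr ih =>
      obtain ⟨g', rfl⟩ : ∃ g' : MonoidAlgebra R A, g' = g := ⟨g, rfl⟩
      obtain ⟨n, x, hx⟩ := ih
      obtain ⟨x0, hx0, k, hak⟩ := hgen a
      have hmemk : a * b0 ^ k = x0 := by rw [hak]; group
      have hmemN : a * b0 ^ (n + k) ∈ Aplus := by
        have h : a * b0 ^ (n + k) = (a * b0 ^ k) * b0 ^ n := by group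
        rw [h, hmemk]
        exact Aplus.mul_mem hx0 (Aplus.pow_mem hb0 n)
      refine ⟨n + k, MonoidAlgebra.single ⟨a * b0 ^ (n + k), hmemN⟩ r
        + x * (MonoidAlgebra.of R ↥Aplus (⟨b0, hb0⟩ : ↥Aplus)) ^ k, ?_⟩
      show (MonoidAlgebra.single a r + g') * (MonoidAlgebra.of R A) b0 ^ (n + k) = f _
      rw [add_mul, pow_add, ← mul_assoc g', hx, map_add, map_mul, map_pow]
      simp only [MonoidAlgebra.of_apply, hf_single, MonoidAlgebra.single_pow, one_pow,
        MonoidAlgebra.single_mul_single, mul_one, one_mul]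
      rw [← pow_add]
  refine ⟨?_, ?_, ?_⟩
  · rintro ⟨y, m, rfl⟩
    rw [halg]
    simp only [map_pow]
    apply IsUnit.pow
    refine IsUnit.of_mul_eq_one (MonoidAlgebra.of R A b0⁻¹) ?_
    rw [MonoidAlgebra.of_apply, hf_single, MonoidAlgebra.of_apply,
      MonoidAlgebra.single_mul_single, mul_one]
    simp [MonoidAlgebra.one_def]
  · intro z
    obtain ⟨n, x, hx⟩ := key z
    exact ⟨⟨x, ⟨(MonoidAlgebra.of R ↥Aplus (⟨b0, hb0⟩ : ↥Aplus)) ^ n, ⟨n, rfl⟩⟩⟩, by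
      rw [halg]; simpa [map_pow, MonoidAlgebra.of_apply, hf_single] using hx⟩
  · intro x y h
    rw [halg] at h
    exact ⟨1, by rw [hfinj h]⟩
end

section
/- Let R be a commutative ring, A a commutative group, A⁺ ⊆ A a submonoid, and b0 ∈ A⁺ an element such that A = A⁺[b0⁻¹]. Then the monoid algebra R[A], viewed as a module over R[A⁺] via the inclusion A⁺ ⊆ A, is a flat R[A⁺]-module. -/
/-- Let `R` be a commutative ring, `A` a commutative group, `A⁺ ⊆ A` a
submonoid and `b0 ∈ A⁺` with `A = A⁺[b0⁻¹]`.  Then the monoid algebra `R[A]`, viewed as a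
module over `R[A⁺]` via the inclusion `A⁺ ⊆ A`, is flat over `R[A⁺]`. -/
theorem monoidAlgebra_flat {R : Type*} [CommRing R] {A : Type*} [CommGroup A]
    (Aplus : Submonoid A) (b0 : A) (hb0 : b0 ∈ Aplus)
    (hgen : ∀ a : A, ∃ x ∈ Aplus, ∃ n : ℕ, a = x * b0⁻¹ ^ n) :
    letI : Module (MonoidAlgebra R ↥Aplus) (MonoidAlgebra R A) :=
      Module.compHom (MonoidAlgebra R A) (MonoidAlgebra.mapDomainRingHom R Aplus.subtype)
    Module.Flat (MonoidAlgebra R ↥Aplus) (MonoidAlgebra R A) := by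
  set φ := MonoidAlgebra.mapDomainRingHom R Aplus.subtype with hφ
  letI : Algebra (MonoidAlgebra R ↥Aplus) (MonoidAlgebra R A) := φ.toAlgebra
  set b : ↥Aplus := ⟨b0, hb0⟩ with hb
  set S : Submonoid (MonoidAlgebra R ↥Aplus) :=
    Submonoid.powers (MonoidAlgebra.of R ↥Aplus b) with hS
  have hφ_single : ∀ (s : ↥Aplus) (r : R),
      φ (MonoidAlgebra.single s r) = MonoidAlgebra.single (s : A) r := by
    intro s r
    simp [hφ, MonoidAlgebra.mapDomainRingHom, Finsupp.mapDomain_single]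
  have hφ_pow : ∀ n : ℕ, φ ((MonoidAlgebra.of R ↥Aplus b) ^ n) =
      MonoidAlgebra.single ((b0 : A) ^ n) (1 : R) := by
    intro n
    rw [map_pow]
    rw [show φ (MonoidAlgebra.of R ↥Aplus b) = MonoidAlgebra.single (b0 : A) 1 from
      hφ_single b 1]
    rw [MonoidAlgebra.single_pow, one_pow]
  haveI : IsLocalization S (MonoidAlgebra R A) := by
    constructor
    constructor
    · rintro ⟨s, m, rfl⟩
      rw [show (algebraMap (MonoidAlgebra R ↥Aplus) (MonoidAlgebra R A)) = φ from rfl]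
      rw [hφ_pow]
      rw [← one_pow m, ← MonoidAlgebra.single_pow]
      exact (((Group.isUnit b0).map (MonoidAlgebra.of R A)).pow m)
    · intro z
      suffices h : ∃ (x : MonoidAlgebra R ↥Aplus) (n : ℕ),
          z * φ ((MonoidAlgebra.of R ↥Aplus b) ^ n) = φ x by
        obtain ⟨x, n, hx⟩ := h
        exact ⟨(x, ⟨_, ⟨n, rfl⟩⟩), hx⟩
      induction z using MonoidAlgebra.induction with
      | zero => exact ⟨0, 0, by simp⟩
      | single_add a r f _ _ ih =>
        obtain ⟨x, n, hx⟩ := ih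
        obtain ⟨x0, hx0, n0, ha⟩ := hgen a
        have key : a * b0 ^ (n0 + n) = x0 * b0 ^ n := by
          rw [ha]; group
        have hmem : a * b0 ^ (n0 + n) ∈ Aplus := by
          rw [key]; exact Aplus.mul_mem hx0 (Aplus.pow_mem hb0 n)
        refine ⟨MonoidAlgebra.single ⟨a * b0 ^ (n0 + n), hmem⟩ r +
          x * (MonoidAlgebra.of R ↥Aplus b) ^ n0, n0 + n, ?_⟩
        rw [add_mul, map_add, hφ_pow]
        congr 1
        · rw [show ((MonoidAlgebra.single a r : MonoidAlgebra R A)) *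
              MonoidAlgebra.single (b0 ^ (n0 + n)) 1 =
              MonoidAlgebra.single (a * b0 ^ (n0 + n)) (r * 1) from
            MonoidAlgebra.single_mul_single ..]
          rw [hφ_single]
          simp
        · rw [map_mul, hφ_pow]
          have hsp : MonoidAlgebra.single (b0 ^ n * b0 ^ n0) (1 : R) =
              MonoidAlgebra.single (b0 ^ n) 1 * MonoidAlgebra.single (b0 ^ n0) 1 := by
            rw [MonoidAlgebra.single_mul_single, one_mul]
          rw [show n0 + n = n + n0 from add_comm n0 n, pow_add, hsp, ← mul_assoc,
            ← hφ_pow n, hx]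
    · intro x y h
      refine ⟨1, ?_⟩
      have hinj : Function.Injective φ :=
        MonoidAlgebra.mapDomain_injective (R := R) Subtype.val_injective
      simp [hinj h]
  exact IsLocalization.flat (MonoidAlgebra R A) S
end

section
/- Let R be a commutative ring, M a group, M⁺ ⊆ M a submonoid, and b0 ∈ M⁺ an element lying in the center of M such that M = M⁺[b0⁻¹]. Let V and W be modules over the monoid algebra R[M]. Then every R[M⁺]-linear map f : V → W (linearity with respect to the subalgebra R[M⁺] ⊆ R[M]) is automatically R[M]-linear. In other words, the restriction functor from R[M]-modules to R[M⁺]-modules is fully faithful. -/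
/-- Let `R` be a commutative ring, `M` a group, `M⁺ ⊆ M` a submonoid and
`b0 ∈ M⁺` a central element of `M` with `M = M⁺[b0⁻¹]`.  Let `V`, `W` be `R[M]`-modules.
Then every additive map `f : V → W` that is linear over the subalgebra
`R[M⁺] ⊆ R[M]` (scalars acting via the ring map `R[M⁺] → R[M]` induced by the inclusion)
is automatically `R[M]`-linear; i.e. restriction from `R[M]`-modules to `R[M⁺]`-modules
is fully faithful. -/
theorem restriction_fully_faithful {R : Type*} [CommRing R] {M : Type*} [Group M]
    (Mplus : Submonoid M) (b0 : M) (hb0 : b0 ∈ Mplus) (hcent : b0 ∈ Subgroup.center M)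
    (hgen : ∀ m : M, ∃ x ∈ Mplus, ∃ n : ℕ, m = x * b0⁻¹ ^ n)
    {V W : Type*} [AddCommGroup V] [AddCommGroup W]
    [Module (MonoidAlgebra R M) V] [Module (MonoidAlgebra R M) W]
    (f : V →+ W)
    (hf : ∀ (c : MonoidAlgebra R ↥Mplus) (v : V),
      f (MonoidAlgebra.mapDomainRingHom R Mplus.subtype c • v) =
        MonoidAlgebra.mapDomainRingHom R Mplus.subtype c • f v) :
    ∀ (c : MonoidAlgebra R M) (v : V), f (c • v) = c • f v := by
  -- f commutes with the action of any element of M⁺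
  have key : ∀ (x : M), x ∈ Mplus → ∀ v : V,
      f (MonoidAlgebra.of R M x • v) = MonoidAlgebra.of R M x • f v := by
    intro x hx v
    have h := hf (MonoidAlgebra.of R Mplus ⟨x, hx⟩) v
    simpa [MonoidAlgebra.of_apply, MonoidAlgebra.mapDomainRingHom_apply,
      Finsupp.mapDomain_single] using h
  -- f commutes with R-scalars (via algebraMap)
  have keyR : ∀ (r : R) (v : V),
      f ((algebraMap R (MonoidAlgebra R M) r) • v)
        = (algebraMap R (MonoidAlgebra R M) r) • f v := by
    intro r v
    have h := hf (algebraMap R (MonoidAlgebra R Mplus) r) v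
    simpa [MonoidAlgebra.coe_algebraMap, MonoidAlgebra.mapDomainRingHom_apply,
      MonoidAlgebra.single_algebraMap_eq_algebraMap_mul_of, Finsupp.mapDomain_single] using h
  intro c v
  induction c using MonoidAlgebra.induction_on with
  | of g =>
    obtain ⟨x, hx, n, hg⟩ := hgen g
    have h1 : Commute b0 x := (Subgroup.mem_center_iff.mp hcent x).symm
    have hcomm : Commute (b0 ^ n) x := h1.pow_left n
    have hb : b0 ^ n * g = x := by
      rw [hg, inv_pow, ← mul_assoc, hcomm.eq, mul_assoc, mul_inv_cancel, mul_one]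
    -- the action of of (b0^n) is injective
    have hinj : Function.Injective (fun w : W => MonoidAlgebra.of R M (b0 ^ n) • w) := by
      intro w1 w2 h
      have h2 := congrArg (fun w => MonoidAlgebra.of R M ((b0 ^ n)⁻¹) • w) h
      simpa [smul_smul, ← map_mul, ← MonoidAlgebra.one_def] using h2
    apply hinj
    simp only []
    calc MonoidAlgebra.of R M (b0 ^ n) • f (MonoidAlgebra.of R M g • v)
        = f (MonoidAlgebra.of R M (b0 ^ n) • MonoidAlgebra.of R M g • v) :=
          (key _ (pow_mem hb0 n) _).symm
      _ = f (MonoidAlgebra.of R M x • v) := by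
          rw [smul_smul, ← map_mul, hb]
      _ = MonoidAlgebra.of R M x • f v := key _ hx _
      _ = MonoidAlgebra.of R M (b0 ^ n) • MonoidAlgebra.of R M g • f v := by
          rw [smul_smul, ← map_mul, hb]
  | add a b ha hb =>
    simp [add_smul, ha, hb]
  | smul r a ha =>
    rw [Algebra.smul_def, mul_smul, mul_smul, keyR, ha]
end

section
/- Let R be a ring, V an Artinian R-module, and f : V → V an R-linear endomorphism. Then for every sequence (wₙ)ₙ∈ℕ of elements of V there exists a sequence (vₙ)ₙ∈ℕ of elements of V such that wₙ = vₙ − f(vₙ₊₁) for all n ∈ ℕ. -/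
/-- Let `R` be a ring, `V` an Artinian `R`-module and `f : V → V` an
`R`-linear endomorphism.  Then for every sequence `(wₙ)` in `V` there is a sequence `(vₙ)`
with `wₙ = vₙ - f (vₙ₊₁)` for all `n` (vanishing of `lim¹` for the tower `⋯ → V → V → V`
with transition maps `f`). -/
theorem artinian_lim1_vanishing {R : Type*} [Ring R] {V : Type*} [AddCommGroup V]
    [Module R V] [IsArtinian R V] (f : V →ₗ[R] V) (w : ℕ → V) :
    ∃ v : ℕ → V, ∀ n : ℕ, w n = v n - f (v (n + 1)) := by
  have hmono : ∀ {a b : ℕ}, a ≤ b → LinearMap.range (f ^ b) ≤ LinearMap.range (f ^ a) := by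
    intro a b hab
    obtain ⟨k, rfl⟩ := Nat.exists_eq_add_of_le hab
    rw [pow_add]
    rintro x ⟨y, rfl⟩
    exact ⟨(f ^ k) y, rfl⟩
  obtain ⟨N, hN⟩ := IsArtinian.monotone_stabilizes (R := R) (M := V)
    ⟨fun n => OrderDual.toDual (LinearMap.range (f ^ n)), fun a b hab => hmono hab⟩
  have hNr : LinearMap.range (f ^ N) = LinearMap.range (f ^ (N + 1)) :=
    OrderDual.toDual.injective (hN (N + 1) (Nat.le_succ N))
  set W := LinearMap.range (f ^ N) with hW
  -- surjectivity of `f` restricted to `W`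
  have hsurj : ∀ z : W, ∃ y : W, f (y : V) = (z : V) := by
    rintro ⟨z, hz⟩
    have hz' : z ∈ LinearMap.range (f ^ (N + 1)) := hNr ▸ hz
    obtain ⟨y, hy⟩ := hz'
    refine ⟨⟨(f ^ N) y, ⟨y, rfl⟩⟩, ?_⟩
    rw [pow_succ'] at hy
    simpa [Module.End.mul_apply] using hy
  choose g hg using hsurj
  -- the element of `W` to be subtracted at stage `n`
  set wW : ℕ → W := fun n => ⟨(f ^ N) (w (n + N)), ⟨w (n + N), rfl⟩⟩ with hwW
  -- the correcting sequence in `W`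
  set y : ℕ → W := fun n => Nat.rec 0 (fun m ym => g (ym - wW m)) n with hy
  have hyrec : ∀ n, f ((y (n + 1) : W) : V) = ((y n : W) : V) - (f ^ N) (w (n + N)) := by
    intro n
    have : y (n + 1) = g (y n - wW n) := rfl
    rw [this, hg]
    rfl
  refine ⟨fun n => (∑ k ∈ Finset.range N, (f ^ k) (w (n + k))) + ((y n : W) : V), fun n => ?_⟩
  have hsum : (∑ k ∈ Finset.range N, (f ^ k) (w (n + k))) + (f ^ N) (w (n + N))
      = w n + f (∑ k ∈ Finset.range N, (f ^ k) (w (n + 1 + k))) := by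
    rw [← Finset.sum_range_succ, Finset.sum_range_succ', map_sum]
    simp only [pow_zero, Module.End.one_apply, Nat.add_zero]
    rw [add_comm]
    congr 1
    refine Finset.sum_congr rfl fun k _ => ?_
    rw [pow_succ']
    simp only [Module.End.mul_apply]
    have hk : n + 1 + k = n + (k + 1) := by omega
    rw [hk]
  show w n = ((∑ k ∈ Finset.range N, (f ^ k) (w (n + k))) + ((y n : W) : V))
      - f ((∑ k ∈ Finset.range N, (f ^ k) (w (n + 1 + k))) + ((y (n + 1) : W) : V))
  rw [map_add, hyrec n]
  have hA : (∑ k ∈ Finset.range N, (f ^ k) (w (n + k)))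
      = w n + f (∑ k ∈ Finset.range N, (f ^ k) (w (n + 1 + k))) - (f ^ N) (w (n + N)) := by
    rw [eq_sub_iff_add_eq, hsum]
  rw [hA]
  abel
end

section
/- Let R be a ring, V a Noetherian R-module, and f : V → V an R-linear endomorphism. If (vₙ)ₙ∈ℕ is a sequence of elements of V satisfying vₙ = f(vₙ₊₁) for all n ∈ ℕ and v₀ = 0, then vₙ = 0 for all n ∈ ℕ. Equivalently, the R-linear map from the inverse limit of the system ⋯ → V → V → V (all transition maps equal to f) to V given by projection onto the 0-th component is injective. -/
/-- Let `R` be a ring, `V` a Noetherian `R`-module and `f : V → V` an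
`R`-linear endomorphism.  If `(vₙ)` is a sequence in `V` with `vₙ = f (vₙ₊₁)` for all `n`
and `v₀ = 0`, then `vₙ = 0` for all `n`; i.e. projection onto the `0`-th component from the
inverse limit of the tower `⋯ → V → V → V` (all transition maps `f`) is injective. -/
theorem noetherian_invlimit_proj_injective {R : Type*} [Ring R] {V : Type*} [AddCommGroup V]
    [Module R V] [IsNoetherian R V] (f : V →ₗ[R] V) (v : ℕ → V)
    (hcompat : ∀ n : ℕ, v n = f (v (n + 1))) (h0 : v 0 = 0) :
    ∀ n : ℕ, v n = 0 := by
  have key : ∀ k n : ℕ, v n = (f ^ k) (v (n + k)) := by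
    intro k
    induction k with
    | zero => simp
    | succ k ih =>
      intro n
      rw [ih n, hcompat (n + k)]
      have : (f ^ (k + 1)) (v (n + (k + 1))) = (f ^ k) (f (v (n + k + 1))) := by
        rw [pow_succ, Module.End.mul_apply]
        ring_nf
      rw [this]
  obtain ⟨N, hN : ∀ m, N ≤ m → LinearMap.ker (f ^ N) = LinearMap.ker (f ^ m)⟩ :=
    monotone_stabilizes_iff_noetherian.mpr inferInstance f.iterateKer
  intro n
  have hker : v (n + N) ∈ LinearMap.ker (f ^ (n + N)) := by
    rw [LinearMap.mem_ker]
    have h := key (n + N) 0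
    rw [h0, Nat.zero_add] at h
    exact h.symm
  · rw [← hN (n + N) (Nat.le_add_left N n)] at hker
    rw [key N n]
    exact hker
end

section
/- Let R be a commutative Noetherian ring, A a commutative group, A⁺ ⊆ A a submonoid, and b0 ∈ A⁺ an element such that A = A⁺[b0⁻¹]. Let V be a module over the monoid algebra R[A⁺] that is finitely generated as an R-module. Then the evaluation map Hom_{R[A⁺]}(R[A], V) → V, φ ↦ φ(1), is an injective R-linear map, and consequently Hom_{R[A⁺]}(R[A], V) is a finitely generated R-module. -/
open MonoidAlgebra Filter


/-- Let `R` be a commutative Noetherian ring, `A` a commutative group,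
`A⁺ ⊆ A` a submonoid and `b0 ∈ A⁺` with `A = A⁺[b0⁻¹]`.  Let `V` be an `R[A⁺]`-module
that is finitely generated over `R`.  Then the evaluation map
`Hom_{R[A⁺]}(R[A], V) → V`, `φ ↦ φ 1`, is injective, and consequently
`Hom_{R[A⁺]}(R[A], V)` is a finitely generated `R`-module. -/
theorem smooth_induction_finite {R : Type*} [CommRing R] [IsNoetherianRing R]
    {A : Type*} [CommGroup A] (Aplus : Submonoid A) (b0 : A) (hb0 : b0 ∈ Aplus)
    (hgen : ∀ a : A, ∃ x ∈ Aplus, ∃ n : ℕ, a = x * b0⁻¹ ^ n)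
    {V : Type*} [AddCommGroup V] [Module R V] [Module (MonoidAlgebra R ↥Aplus) V]
    [IsScalarTower R (MonoidAlgebra R ↥Aplus) V] (hV : Module.Finite R V) :
    letI : Module (MonoidAlgebra R ↥Aplus) (MonoidAlgebra R A) :=
      Module.compHom (MonoidAlgebra R A) (MonoidAlgebra.mapDomainRingHom R Aplus.subtype)
    Function.Injective
      (fun φ : MonoidAlgebra R A →ₗ[MonoidAlgebra R ↥Aplus] V => φ 1) ∧
    Module.Finite R (MonoidAlgebra R A →ₗ[MonoidAlgebra R ↥Aplus] V) := by
  letI : Module (MonoidAlgebra R ↥Aplus) (MonoidAlgebra R A) :=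
    Module.compHom (MonoidAlgebra R A) (MonoidAlgebra.mapDomainRingHom R Aplus.subtype)
  haveI := hV
  haveI : IsNoetherian R V := isNoetherian_of_isNoetherianRing_of_finite R V
  -- the scalar action explicitly
  have hsmul : ∀ (s : MonoidAlgebra R ↥Aplus) (m : MonoidAlgebra R A),
      s • m = MonoidAlgebra.mapDomainRingHom R Aplus.subtype s * m := fun s m => rfl
  set b : MonoidAlgebra R ↥Aplus := MonoidAlgebra.single ⟨b0, hb0⟩ 1 with hb
  -- multiplication by b as an R-linear endomorphism of V
  set θ : V →ₗ[R] V :=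
    { toFun := fun v => b • v
      map_add' := fun v w => smul_add b v w
      map_smul' := fun r v => (smul_comm r b v).symm } with hθ
  -- key lemma: kernel of evaluation is trivial
  have key : ∀ φ : MonoidAlgebra R A →ₗ[MonoidAlgebra R ↥Aplus] V, φ 1 = 0 → φ = 0 := by
    intro φ hφ1
    set u : ℕ → V := fun n => φ (MonoidAlgebra.single (b0⁻¹ ^ n) 1) with hu
    have hu0 : u 0 = 0 := by
      simpa [hu, pow_zero, MonoidAlgebra.one_def] using hφ1
    have hstep : ∀ n, θ (u (n + 1)) = u n := by
      intro n
      have : b • (MonoidAlgebra.single (b0⁻¹ ^ (n + 1)) 1 : MonoidAlgebra R A)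
          = MonoidAlgebra.single (b0⁻¹ ^ n) 1 := by
        have hmul : b0 * b0⁻¹ ^ (n + 1) = b0⁻¹ ^ n := by group
        rw [hsmul, hb]
        have hmd : (MonoidAlgebra.mapDomainRingHom R Aplus.subtype)
            (MonoidAlgebra.single (⟨b0, hb0⟩ : ↥Aplus) (1 : R))
            = MonoidAlgebra.single b0 1 := MonoidAlgebra.mapDomain_single
        rw [hmd, MonoidAlgebra.single_mul_single, one_mul, hmul]
      simp only [hθ, hu, LinearMap.coe_mk, AddHom.coe_mk, ← map_smul, this]
    have hiter : ∀ k n, (θ ^ k) (u (n + k)) = u n := by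
      intro k
      induction k with
      | zero => intro n; simp
      | succ k ih =>
        intro n
        have e1 : n + (k + 1) = (n + k) + 1 := by ring
        rw [e1, pow_succ, Module.End.mul_apply, hstep, ih]
    have huzero : ∀ n, u n = 0 := by
      intro n
      obtain ⟨N0, hN0⟩ := eventually_atTop.mp (Module.End.eventually_disjoint_ker_pow_range_pow θ)
      set N := max n N0 with hN
      have hker : u n ∈ LinearMap.ker (θ ^ N) := by
        rw [LinearMap.mem_ker]
        have h1 : (θ ^ n) (u n) = 0 := by
          have h := hiter n 0
          rw [hu0] at h
          simpa using h
        exact Module.End.pow_map_zero_of_le (le_max_left n N0) h1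
      have hrange : u n ∈ LinearMap.range (θ ^ N) := ⟨u (n + N), hiter N n⟩
      exact (hN0 N (le_max_right n N0)).le_bot ⟨hker, hrange⟩
    have hsingle : ∀ (a : A) (r : R), φ (MonoidAlgebra.single a r) = 0 := by
      intro a r
      obtain ⟨x, hx, n, rfl⟩ := hgen a
      have : (MonoidAlgebra.single (⟨x, hx⟩ : ↥Aplus) r : MonoidAlgebra R ↥Aplus) •
          (MonoidAlgebra.single (b0⁻¹ ^ n) 1 : MonoidAlgebra R A)
          = MonoidAlgebra.single (x * b0⁻¹ ^ n) r := by
        rw [hsmul]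
        simp [MonoidAlgebra.single_mul_single]
      rw [← this, map_smul]
      rw [show φ (MonoidAlgebra.single (b0⁻¹ ^ n) 1) = u n from rfl, huzero, smul_zero]
    ext m
    simp only [LinearMap.zero_apply]
    induction m using MonoidAlgebra.induction with
    | zero => simp
    | single_add a r f _ _ ih =>
      rw [map_add, ih, add_zero]
      exact hsingle a r
  have hinj : Function.Injective
      (fun φ : MonoidAlgebra R A →ₗ[MonoidAlgebra R ↥Aplus] V => φ 1) := by
    intro φ ψ h
    have : (φ - ψ) 1 = 0 := by simpa [sub_eq_zero] using h
    have := key _ this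
    rwa [sub_eq_zero] at this
  refine ⟨hinj, ?_⟩
  let e : (MonoidAlgebra R A →ₗ[MonoidAlgebra R ↥Aplus] V) →ₗ[R] V :=
    { toFun := fun φ => φ 1
      map_add' := fun φ ψ => rfl
      map_smul' := fun r φ => rfl }
  exact Module.Finite.of_injective e hinj
end

section
/- Let S be a commutative Noetherian ring, I an injective S-module, and 𝒜 a nonempty collection of ideals of S such that: (i) for all ideals a, b ∈ 𝒜 there exists c ∈ 𝒜 with c ⊆ a ∩ b; and (ii) for every a ∈ 𝒜 and every n ≥ 1 there exists c ∈ 𝒜 with c ⊆ aⁿ. Then the subset {x ∈ I : a·x = 0 for some a ∈ 𝒜} is an S-submodule of I and is an injective S-module. -/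
namespace TorsionPartInjectiveAux

open Module.Baer

universe u v

variable {R : Type u} [Ring R] {Q : Type v} [AddCommGroup Q] [Module R Q]
variable {M N : Type*} [AddCommGroup M] [AddCommGroup N] [Module R M] [Module R N]
variable (i : M →ₗ[R] N) (f : M →ₗ[R] Q) [Fact <| Function.Injective i]

/-- Analogue of `Module.Baer.ExtensionOfMaxAdjoin.extensionToFun` with a supplied
extension `φ` of the ideal map. -/
noncomputable def myToFun (φ : R →ₗ[R] Q) {y : N} :
    supExtensionOfMaxSingleton i f y → Q := fun x =>
  (extensionOfMax i f).toLinearPMap (ExtensionOfMaxAdjoin.fst i x) +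
    φ (ExtensionOfMaxAdjoin.snd i x)

theorem myToFun_wd (φ : R →ₗ[R] Q) {y : N}
    (hφ : ∀ (r : R) (hr : r • y ∈ (extensionOfMax i f).domain),
      φ r = (extensionOfMax i f).toLinearPMap ⟨r • y, hr⟩)
    (x : supExtensionOfMaxSingleton i f y) (a : (extensionOfMax i f).domain)
    (r : R) (eq1 : ↑x = ↑a + r • y) :
    myToFun i f φ x = (extensionOfMax i f).toLinearPMap a + φ r := by
  cases' a with a ha
  have eq2 :
      (ExtensionOfMaxAdjoin.fst i x - a : N) = (r - ExtensionOfMaxAdjoin.snd i x) • y := by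
    change x = a + r • y at eq1
    rwa [ExtensionOfMaxAdjoin.eqn, ← sub_eq_zero, ← sub_sub_sub_eq, sub_eq_zero, ← sub_smul]
      at eq1
  have eq3 := hφ (r - ExtensionOfMaxAdjoin.snd i x)
    (by rw [← eq2]; exact Submodule.sub_mem _ (ExtensionOfMaxAdjoin.fst i x).2 ha)
  simp only [map_sub, sub_smul, sub_eq_iff_eq_add] at eq3
  unfold myToFun
  rw [eq3, ← add_assoc, ← (extensionOfMax i f).toLinearPMap.map_add, AddMemClass.mk_add_mk]
  congr
  ext
  dsimp
  rw [Subtype.coe_mk, add_sub, ← eq1]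
  exact eq_sub_of_add_eq (ExtensionOfMaxAdjoin.eqn i x).symm

/-- Analogue of `Module.Baer.extensionOfMaxAdjoin` with a supplied extension `φ`. -/
noncomputable def myAdjoin (φ : R →ₗ[R] Q) {y : N}
    (hφ : ∀ (r : R) (hr : r • y ∈ (extensionOfMax i f).domain),
      φ r = (extensionOfMax i f).toLinearPMap ⟨r • y, hr⟩) :
    ExtensionOf i f where
  domain := supExtensionOfMaxSingleton i f y
  le := le_trans (extensionOfMax i f).le le_sup_left
  toFun :=
    { toFun := myToFun i f φ
      map_add' := fun a b => by
        have eq1 :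
            ↑a + ↑b =
              ↑(ExtensionOfMaxAdjoin.fst i a + ExtensionOfMaxAdjoin.fst i b) +
                (ExtensionOfMaxAdjoin.snd i a + ExtensionOfMaxAdjoin.snd i b) • y := by
          rw [ExtensionOfMaxAdjoin.eqn, ExtensionOfMaxAdjoin.eqn, add_smul, Submodule.coe_add]
          ac_rfl
        rw [myToFun_wd (y := y) i f φ hφ (a + b) _ _ eq1, LinearPMap.map_add, map_add]
        unfold myToFun
        abel
      map_smul' := fun r a => by
        dsimp
        have eq1 :
            r • (a : N) =
              ↑(r • ExtensionOfMaxAdjoin.fst i a) + (r • ExtensionOfMaxAdjoin.snd i a) • y := by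
          rw [ExtensionOfMaxAdjoin.eqn, smul_add, smul_eq_mul, mul_smul]
          rfl
        rw [myToFun_wd i f φ hφ (r • a :) _ _ eq1, LinearMap.map_smul, LinearPMap.map_smul,
          ← smul_add]
        congr }
  is_extension m := by
    dsimp
    rw [(extensionOfMax i f).is_extension,
      myToFun_wd i f φ hφ _ ⟨i m, _⟩ 0 _, map_zero, add_zero]
    simp

theorem myExtensionOfMax_le (φ : R →ₗ[R] Q) {y : N}
    (hφ : ∀ (r : R) (hr : r • y ∈ (extensionOfMax i f).domain),
      φ r = (extensionOfMax i f).toLinearPMap ⟨r • y, hr⟩) :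
    extensionOfMax i f ≤ myAdjoin i f φ hφ :=
  ⟨le_sup_left, fun x x' EQ => by
    symm
    change myToFun i f φ _ = _
    rw [myToFun_wd i f φ hφ x' x 0 (by simp [EQ]), map_zero, add_zero]⟩

/-- The strong extension property: for every module `N` in the same universe as `Q`,
submodule `D ≤ N`, map `g : D →ₗ Q` and `y : N`, the "ideal map" `r ↦ g (r • y)`
extends to `R`. -/
def StrongExt (R : Type u) (Q : Type v) [Ring R] [AddCommGroup Q] [Module R Q] : Prop :=
  ∀ (N : Type v) [AddCommGroup N] [Module R N] (D : Submodule R N) (g : D →ₗ[R] Q) (y : N),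
    ∃ φ : R →ₗ[R] Q, ∀ (r : R) (hr : r • y ∈ D), φ r = g ⟨r • y, hr⟩

theorem injective_of_strongExt (H : StrongExt R Q) : Module.Injective R Q where
  out X Y _ _ _ _ i hi f := by
    haveI : Fact (Function.Injective i) := ⟨hi⟩
    have htop : (extensionOfMax i f).domain = ⊤ := by
      refine Submodule.eq_top_iff'.mpr fun y => ?_
      obtain ⟨φ, hφ⟩ :=
        H Y (extensionOfMax i f).domain (extensionOfMax i f).toLinearPMap.toFun y
    -- `toLinearPMap.toFun` applied is defeq to `toLinearPMap` applied
      have hφ' : ∀ (r : R) (hr : r • y ∈ (extensionOfMax i f).domain),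
          φ r = (extensionOfMax i f).toLinearPMap ⟨r • y, hr⟩ := hφ
      rw [← extensionOfMax_is_max i f _ (myExtensionOfMax_le i f φ hφ')]
      have : y ∈ (myAdjoin i f φ hφ').domain := by
        rw [myAdjoin, Submodule.mem_sup]
        exact ⟨0, Submodule.zero_mem _, y, Submodule.mem_span_singleton_self _, zero_add _⟩
      exact this
    refine ⟨{ toFun := fun y => (extensionOfMax i f).toLinearPMap ⟨y, htop.symm ▸ ⟨⟩⟩
              map_add' := fun x y => by rw [← LinearPMap.map_add]; congr
              map_smul' := fun r x => by rw [← LinearPMap.map_smul]; dsimp }, fun x => ?_⟩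
    exact ((extensionOfMax i f).is_extension x).symm

end TorsionPartInjectiveAux

open TorsionPartInjectiveAux in
/-- Let `S` be a commutative Noetherian ring, `I` an injective
`S`-module and `𝒜` a nonempty family of ideals of `S` that is downward directed
(for `a, b ∈ 𝒜` there is `c ∈ 𝒜` with `c ⊆ a ∩ b`) and closed under powers (for `a ∈ 𝒜`
and `n ≥ 1` there is `c ∈ 𝒜` with `c ⊆ aⁿ`).  Then
`{x ∈ I | a • x = 0 for some a ∈ 𝒜}` is an `S`-submodule of `I` and is itself an
injective `S`-module. -/
theorem torsion_part_injective {S : Type*} [CommRing S] [IsNoetherianRing S]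
    {I : Type*} [AddCommGroup I] [Module S I] (hI : Module.Injective S I)
    (𝒜 : Set (Ideal S)) (hne : 𝒜.Nonempty)
    (hdir : ∀ a ∈ 𝒜, ∀ b ∈ 𝒜, ∃ c ∈ 𝒜, c ≤ a ⊓ b)
    (hpow : ∀ a ∈ 𝒜, ∀ n : ℕ, 1 ≤ n → ∃ c ∈ 𝒜, c ≤ a ^ n) :
    ∃ p : Submodule S I,
      (p : Set I) = {x : I | ∃ a ∈ 𝒜, ∀ s ∈ a, s • x = 0} ∧
      Module.Injective S ↥p := by
  classical
  -- the torsion submodule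
  set p : Submodule S I :=
    { carrier := {x : I | ∃ a ∈ 𝒜, ∀ s ∈ a, s • x = 0}
      zero_mem' := ⟨hne.choose, hne.choose_spec, fun s _ => smul_zero s⟩
      add_mem' := by
        rintro x y ⟨a, ha, hax⟩ ⟨b, hb, hby⟩
        obtain ⟨c, hc, hcab⟩ := hdir a ha b hb
        exact ⟨c, hc, fun s hs => by
          rw [smul_add, hax s ((hcab hs).1), hby s ((hcab hs).2), add_zero]⟩
      smul_mem' := by
        rintro r x ⟨a, ha, hax⟩
        exact ⟨a, ha, fun s hs => by rw [smul_comm, hax s hs, smul_zero]⟩ } with hp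
  refine ⟨p, rfl, ?_⟩
  -- common annihilating ideal for finitely many torsion elements
  have hcommon : ∀ T : Finset I, (∀ t ∈ T, (t : I) ∈ p) →
      ∃ a ∈ 𝒜, ∀ t ∈ T, ∀ s ∈ a, s • t = 0 := by
    intro T
    induction T using Finset.induction_on with
    | empty => exact fun _ => ⟨hne.choose, hne.choose_spec, fun t ht => absurd ht (by simp)⟩
    | @insert t T htT ih =>
      intro hmem
      obtain ⟨a, ha, haT⟩ := ih fun u hu => hmem u (Finset.mem_insert_of_mem hu)
      obtain ⟨b, hb, hbt⟩ := hmem t (Finset.mem_insert_self t T)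
      obtain ⟨c, hc, hcab⟩ := hdir a ha b hb
      refine ⟨c, hc, fun u hu s hs => ?_⟩
      rcases Finset.mem_insert.mp hu with rfl | hu
      · exact hbt s ((hcab hs).2)
      · exact haT u hu s ((hcab hs).1)
  refine injective_of_strongExt ?_
  intro N _ _ D g y
  -- the colon ideal J = {r | r • y ∈ D}
  set sm : S →ₗ[S] N := LinearMap.smulRight (LinearMap.id : S →ₗ[S] S) y with hsm
  have hsm_apply : ∀ r : S, sm r = r • y := fun r => rfl
  set J : Ideal S := D.comap sm with hJ
  have hJ_mem : ∀ r : S, r ∈ J ↔ r • y ∈ D := fun r => Iff.rfl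
  set g₀ : D →ₗ[S] I := p.subtype ∘ₗ g with hg₀
  have hg₀p : ∀ d : D, g₀ d ∈ p := fun d => (g d).2
  -- J is finitely generated
  obtain ⟨T, hT⟩ : J.FG := IsNoetherian.noetherian J
  -- a common annihilating ideal `a ∈ 𝒜` for g₀ of the generators
  have hTJ : ∀ t ∈ T, (t : S) ∈ J := fun t ht => hT ▸ Submodule.subset_span ht
  set v : S → I := fun t => if h : t • y ∈ D then g₀ ⟨t • y, h⟩ else 0 with hv
  obtain ⟨a, ha, hav⟩ : ∃ a ∈ 𝒜, ∀ t ∈ Finset.image v T, ∀ s ∈ a, s • t = 0 := by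
    refine hcommon _ ?_
    intro t ht
    obtain ⟨u, hu, rfl⟩ := Finset.mem_image.mp ht
    by_cases h : u • y ∈ D
    · simp only [hv, dif_pos h]; exact hg₀p _
    · simp only [hv, dif_neg h]; exact p.zero_mem
  -- `a` annihilates g₀ of everything coming from J
  have key : ∀ (r : S), r ∈ J → ∀ (h : r • y ∈ D) (s : S), s ∈ a → s • g₀ ⟨r • y, h⟩ = 0 := by
    intro r hrJ
    rw [← hT] at hrJ
    induction hrJ using Submodule.span_induction with
    | mem t ht =>
      intro h s hs
      have h2 : v t = g₀ ⟨t • y, h⟩ := dif_pos h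
      have h3 := hav (v t) (Finset.mem_image_of_mem v ht) s hs
      rw [h2] at h3
      exact h3
    | zero =>
      intro h s hs
      have : (⟨(0 : S) • y, h⟩ : D) = 0 := Subtype.ext (zero_smul S y)
      rw [this, map_zero, smul_zero]
    | add x z hx hz ihx ihz =>
      intro h s hs
      have hxJ : x • y ∈ D := (hJ_mem x).1 (hT ▸ hx)
      have hzJ : z • y ∈ D := (hJ_mem z).1 (hT ▸ hz)
      have : (⟨(x + z) • y, h⟩ : D) = ⟨x • y, hxJ⟩ + ⟨z • y, hzJ⟩ :=
        Subtype.ext (add_smul x z y)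
      rw [this, map_add, smul_add, ihx hxJ s hs, ihz hzJ s hs, add_zero]
    | smul c x hx ihx =>
      intro h s hs
      have hxJ : x • y ∈ D := (hJ_mem x).1 (hT ▸ hx)
      have : (⟨(c • x) • y, h⟩ : D) = c • ⟨x • y, hxJ⟩ := Subtype.ext (smul_assoc c x y)
      rw [this, map_smul, smul_comm, ihx hxJ s hs, smul_zero]
  -- Artin–Rees
  obtain ⟨k, hk⟩ := Ideal.exists_pow_inf_eq_pow_smul a J
  have hAR : (a ^ (k + 1) ⊓ J : Ideal S) ≤ a • J := by
    have h1 := hk (k + 1) (Nat.le_succ k)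
    have e1 : (a ^ (k + 1) • ⊤ : Ideal S) = a ^ (k + 1) := by
      rw [Ideal.smul_eq_mul, Ideal.mul_top]
    have e2 : (a ^ k • ⊤ : Ideal S) = a ^ k := by rw [Ideal.smul_eq_mul, Ideal.mul_top]
    have e3 : k + 1 - k = 1 := by omega
    rw [e1, e2, e3, pow_one] at h1
    rw [h1]
    exact smul_mono_right a inf_le_right
  -- g₀ vanishes on elements of D of the form r • y with r ∈ a^(k+1)
  have hvanish : ∀ r : S, r ∈ a ^ (k + 1) → ∀ h : r • y ∈ D, g₀ ⟨r • y, h⟩ = 0 := by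
    intro r hr h
    have hrJ : r ∈ J := (hJ_mem r).2 h
    have hraJ : r ∈ a • J := hAR ⟨hr, hrJ⟩
    have : ∃ hh : r • y ∈ D, g₀ ⟨r • y, hh⟩ = 0 := by
      refine Submodule.smul_induction_on hraJ ?_ ?_
      · intro s hs x hxJ
        have hx : x • y ∈ D := (hJ_mem x).1 hxJ
        have hsx : (s * x) • y ∈ D := by
          have : (s * x) • y = s • (x • y) := mul_smul s x y
          rw [this]; exact D.smul_mem s hx
        refine ⟨by simpa using hsx, ?_⟩
        have e : (⟨(s • x) • y, by simpa using hsx⟩ : D) = s • ⟨x • y, hx⟩ :=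
          Subtype.ext (smul_assoc s x y)
        rw [e, map_smul]
        exact key x hxJ hx s hs
      · rintro x z ⟨hx, hx0⟩ ⟨hz, hz0⟩
        have hxz : (x + z) • y ∈ D := by
          have : (x + z) • y = x • y + z • y := add_smul x z y
          rw [this]; exact D.add_mem hx hz
        refine ⟨hxz, ?_⟩
        have e : (⟨(x + z) • y, hxz⟩ : D) = ⟨x • y, hx⟩ + ⟨z • y, hz⟩ :=
          Subtype.ext (add_smul x z y)
        rw [e, map_add, hx0, hz0, add_zero]
    obtain ⟨hh, h0⟩ := this
    exact h0
  -- the quotient construction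
  set Z : Submodule S N := Submodule.map sm (a ^ (k + 1)) with hZ
  set K : Submodule S D := Z.comap D.subtype with hK
  have hKker : K ≤ LinearMap.ker g₀ := by
    rintro ⟨d, hd⟩ hdK
    obtain ⟨r, hr, hry⟩ := hdK
    have hry' : r • y = d := hry
    have h : r • y ∈ D := hry' ▸ hd
    have := hvanish r hr h
    have e : (⟨d, hd⟩ : D) = ⟨r • y, h⟩ := Subtype.ext hry'.symm
    rw [LinearMap.mem_ker, e, this]
  set gq : (D ⧸ K) →ₗ[S] I := Submodule.liftQ K g₀ hKker with hgq
  set ι : (D ⧸ K) →ₗ[S] (N ⧸ Z) := Submodule.mapQ K Z D.subtype le_rfl with hι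
  have hι_inj : Function.Injective ι := by
    rw [← LinearMap.ker_eq_bot, hι, Submodule.mapQ, Submodule.ker_liftQ_eq_bot]
    · intro x hx
      exact (Submodule.mem_comap).2 (by simpa using hx)
  obtain ⟨h, hh⟩ := hI.out ι hι_inj gq
  set x₀ : I := h (Z.mkQ y) with hx₀
  -- x₀ is killed by a^(k+1)
  have hx₀tor : ∀ s ∈ a ^ (k + 1), s • x₀ = 0 := by
    intro s hs
    have : s • Z.mkQ y = 0 := by
      rw [← map_smul, Submodule.mkQ_apply, Submodule.Quotient.mk_eq_zero]
      exact ⟨s, hs, rfl⟩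
    rw [hx₀, ← map_smul, this, map_zero]
  -- x₀ reproduces g on J
  have hx₀g : ∀ (r : S) (hr : r • y ∈ D), r • x₀ = g₀ ⟨r • y, hr⟩ := by
    intro r hr
    have e1 : r • Z.mkQ y = ι (Submodule.Quotient.mk (⟨r • y, hr⟩ : D)) := by
      rw [Submodule.mapQ_apply]
      simp [Submodule.mkQ_apply]
    rw [hx₀, ← map_smul, e1, hh, hgq, Submodule.liftQ_apply]
  -- x₀ ∈ p
  have hx₀p : x₀ ∈ p := by
    obtain ⟨c, hc, hca⟩ := hpow a ha (k + 1) (Nat.succ_le_succ (Nat.zero_le k))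
    exact ⟨c, hc, fun s hs => hx₀tor s (hca hs)⟩
  -- the extension φ
  refine ⟨LinearMap.codRestrict p (LinearMap.toSpanSingleton S I x₀)
    (fun r => p.smul_mem r hx₀p), ?_⟩
  intro r hr
  apply Subtype.ext
  have : (LinearMap.toSpanSingleton S I x₀) r = r • x₀ := rfl
  exact hx₀g r hr
end

section
/- Let R be a commutative Noetherian ring, S a finitely generated commutative R-algebra, and a ⊆ S an ideal such that the quotient S/a is finitely generated as an R-module. Then for every n ≥ 1 the quotient S/aⁿ is also finitely generated as an R-module. -/
/-- Let `R` be a commutative Noetherian ring, `S` a finitely generated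
commutative `R`-algebra and `a ⊆ S` an ideal such that `S/a` is finitely generated as an
`R`-module.  Then, for every `n ≥ 1`, the quotient `S/aⁿ` is also finitely generated as an
`R`-module. -/
theorem quotient_ideal_pow_module_finite {R S : Type*} [CommRing R] [IsNoetherianRing R]
    [CommRing S] [Algebra R S] [Algebra.FiniteType R S] (a : Ideal S)
    (ha : Module.Finite R (S ⧸ a)) :
    ∀ n : ℕ, 1 ≤ n → Module.Finite R (S ⧸ a ^ n) := by
  intro n hn
  -- `S ⧸ a ^ n` is a finite type `R`-algebra, being a quotient of `S`.
  haveI : Algebra.FiniteType R (S ⧸ a ^ n) :=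
    Algebra.FiniteType.of_surjective
      (Ideal.Quotient.mkₐ R (a ^ n)) (Ideal.Quotient.mkₐ_surjective R _)
  -- It suffices to show it is integral over `R`.
  haveI : Algebra.IsIntegral R (S ⧸ a ^ n) := by
    constructor
    intro x
    obtain ⟨s, rfl⟩ := Ideal.Quotient.mk_surjective x
    -- the image of `s` in `S ⧸ a` is integral over `R`
    have hint : IsIntegral R (Ideal.Quotient.mk a s) := IsIntegral.of_finite R _
    obtain ⟨p, hp, hps⟩ := hint
    -- `aeval s p ∈ a`, hence `(aeval s p) ^ n ∈ a ^ n`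
    have hmem : Polynomial.aeval s p ∈ a := by
      rw [← Ideal.Quotient.eq_zero_iff_mem]
      have h1 := Polynomial.aeval_algHom_apply (Ideal.Quotient.mkₐ R a) s p
      simp only [Ideal.Quotient.mkₐ_eq_mk] at h1
      rw [← h1]
      rwa [Polynomial.aeval_def]
    refine ⟨p ^ n, hp.pow n, ?_⟩
    rw [← Polynomial.aeval_def, map_pow]
    have h2 := Polynomial.aeval_algHom_apply (Ideal.Quotient.mkₐ R (a ^ n)) s p
    simp only [Ideal.Quotient.mkₐ_eq_mk] at h2
    rw [h2, ← map_pow, Ideal.Quotient.eq_zero_iff_mem]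
    exact Ideal.pow_mem_pow hmem n
  exact Algebra.IsIntegral.finite
end
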